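/- arXiv:1802.04729 — 2 statements merged into one kernel-verified Lean document; each statement's English description precedes it below -/
import Mathlib

section
/- Let χ ∈ Sp(d,ℝ) with blocks [[A,B],[C,D]], and suppose the quadratic phase φ(x,y,θ) = ½⟨(x,y), F(x,y)⟩ + ⟨Lθ,(x,y)⟩ + ½⟨θ,Qθ⟩ with [L;Q] injective parametrizes the twisted graph Lagrangian Λ'_χ, i.e., Λ'_χ = {((x,y), φ'_{(x,y)}(x,y,θ)) : φ'_θ(x,y,θ) = 0}. Writing F = [[E,G],[Gᵀ,H]] and L = [P;R] with E,G,H ∈ M_{d×d}(ℝ) (E, H symmetric) and P,R ∈ M_{d×N}(ℝ), the (2d+N)×(2d+N) matrix [[Gᵀ, H, R],[0, I, 0],[Pᵀ, Rᵀ, Q]] is invertible. -/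
/-!
Let `v = (x, y, θ)` be in the kernel. The middle block row forces `y = 0`, and the other two rows
then say that `θ` is a critical point of `φ(x, 0, ·)` at which `∂_y φ = 0`. The corresponding
point of the Lagrangian therefore has `η = 0`, so it lies over `(y, η) = 0` in the graph of `χ`,
which gives `x = 0` and `∂_x φ = Pθ = 0`. Now `Pθ = Rθ = Qθ = 0`, and injectivity of `[L; Q]`
gives `θ = 0`.
-/

open Matrix

variable {𝕜 : Type*} [CommRing 𝕜] {m n : Type*} [Fintype m] [Fintype n]

/-- The Lagrangian `{((x, y), φ'_{(x,y)}) : φ'_θ = 0}` parametrized by the quadratic phase with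
`F = [[E, G], [Gᵀ, H]]` and `L = [P; R]`, as tuples `(x, y, ξ, ζ)`. -/
def phaseLagrangian (E G H : Matrix m m 𝕜) (P R : Matrix m n 𝕜) (Q : Matrix n n 𝕜) :
    Set ((m → 𝕜) × (m → 𝕜) × (m → 𝕜) × (m → 𝕜)) :=
  {p | ∃ θ : n → 𝕜,
    Pᵀ *ᵥ p.1 + Rᵀ *ᵥ p.2.1 + Q *ᵥ θ = 0 ∧
    p.2.2.1 = E *ᵥ p.1 + G *ᵥ p.2.1 + P *ᵥ θ ∧
    p.2.2.2 = Gᵀ *ᵥ p.1 + H *ᵥ p.2.1 + R *ᵥ θ}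

/-- The twisted graph `{(x, y, ξ, -η) : (x, ξ) = χ (y, η)}` of `χ = [[A, B], [C, D]]`. -/
def twistedGraph (A B C D : Matrix m m 𝕜) : Set ((m → 𝕜) × (m → 𝕜) × (m → 𝕜) × (m → 𝕜)) :=
  {p | ∃ η : m → 𝕜, p.2.2.2 = -η ∧ p.1 = A *ᵥ p.2.1 + B *ᵥ η ∧ p.2.2.1 = C *ᵥ p.2.1 + D *ᵥ η}

theorem fromBlocks_fromCols_fromRows_mulVec_sumElim [DecidableEq m] (G H : Matrix m m 𝕜)
    (P R : Matrix m n 𝕜) (Q : Matrix n n 𝕜) (x y : m → 𝕜) (θ : n → 𝕜) :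
    fromBlocks Gᵀ (fromCols H R) (fromRows 0 Pᵀ) (fromBlocks 1 0 Rᵀ Q) *ᵥ
        Sum.elim x (Sum.elim y θ) =
      Sum.elim (Gᵀ *ᵥ x + H *ᵥ y + R *ᵥ θ) (Sum.elim y (Pᵀ *ᵥ x + Rᵀ *ᵥ y + Q *ᵥ θ)) := by
  simp only [fromBlocks_mulVec, Sum.elim_comp_inl, Sum.elim_comp_inr, fromCols_mulVec_sumElim,
    fromRows_mulVec, ← Sum.elim_add_add, zero_mulVec, one_mulVec, add_assoc, zero_add,
    add_zero]

theorem eq_zero_of_phaseLagrangian_subset_twistedGraph {A B C D E G H : Matrix m m 𝕜}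
    {P R : Matrix m n 𝕜} {Q : Matrix n n 𝕜}
    (hsub : phaseLagrangian E G H P R Q ⊆ twistedGraph A B C D) {x : m → 𝕜} {θ : n → 𝕜}
    (hθ : Pᵀ *ᵥ x + Q *ᵥ θ = 0) (hy : Gᵀ *ᵥ x + R *ᵥ θ = 0) :
    x = 0 ∧ P *ᵥ θ = 0 := by
  have hmem : (x, 0, E *ᵥ x + P *ᵥ θ, Gᵀ *ᵥ x + R *ᵥ θ) ∈ phaseLagrangian E G H P R Q :=
    ⟨θ, by simpa using hθ, by simp, by simp⟩
  obtain ⟨η, hη, hx, hξ⟩ := hsub hmem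
  obtain rfl : η = 0 := neg_eq_zero.mp (hη.symm.trans hy)
  simp only [mulVec_zero, add_zero] at hx hξ
  subst hx
  simpa using hξ

theorem phase_nondegeneracy_general (d N : ℕ)
    (A B C D E G H : Matrix (Fin d) (Fin d) ℝ)
    (P R : Matrix (Fin d) (Fin N) ℝ) (Q : Matrix (Fin N) (Fin N) ℝ)
    (hinj : ∀ θ : Fin N → ℝ,
      P.mulVec θ = 0 → R.mulVec θ = 0 → Q.mulVec θ = 0 → θ = 0)
    (hparam : {p : (Fin d → ℝ) × (Fin d → ℝ) × (Fin d → ℝ) × (Fin d → ℝ) |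
        ∃ θ : Fin N → ℝ,
          Pᵀ.mulVec p.1 + Rᵀ.mulVec p.2.1 + Q.mulVec θ = 0 ∧
          p.2.2.1 = E.mulVec p.1 + G.mulVec p.2.1 + P.mulVec θ ∧
          p.2.2.2 = Gᵀ.mulVec p.1 + H.mulVec p.2.1 + R.mulVec θ}
      = {p | ∃ η : Fin d → ℝ,
          p.2.2.2 = -η ∧ p.1 = A.mulVec p.2.1 + B.mulVec η ∧
          p.2.2.1 = C.mulVec p.2.1 + D.mulVec η}) :
    IsUnit (Matrix.fromBlocks Gᵀ (Matrix.fromCols H R)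
      (Matrix.fromRows (0 : Matrix (Fin d) (Fin d) ℝ) Pᵀ)
      (Matrix.fromBlocks (1 : Matrix (Fin d) (Fin d) ℝ) 0 Rᵀ Q)) := by
  rw [← mulVec_injective_iff_isUnit, ← coe_mulVecLin, injective_iff_map_eq_zero]
  intro v hv
  obtain ⟨x, w, rfl⟩ : ∃ x w, v = Sum.elim x w := ⟨_, _, (Sum.elim_comp_inl_inr v).symm⟩
  obtain ⟨y, θ, rfl⟩ : ∃ y θ, w = Sum.elim y θ := ⟨_, _, (Sum.elim_comp_inl_inr w).symm⟩
  rw [coe_mulVecLin, fromBlocks_fromCols_fromRows_mulVec_sumElim, ← Sum.elim_zero_zero,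
    ← Sum.elim_zero_zero, Sum.elim_eq_iff, Sum.elim_eq_iff] at hv
  obtain ⟨hdy, rfl, hdθ⟩ := hv
  simp only [mulVec_zero, add_zero] at hdy hdθ
  obtain ⟨rfl, hPθ⟩ := eq_zero_of_phaseLagrangian_subset_twistedGraph hparam.subset hdθ hdy
  simp only [mulVec_zero, zero_add] at hdy hdθ
  obtain rfl := hinj θ hPθ hdy hdθ
  simp only [Sum.elim_zero_zero]

/-- Invertibility of the matrix `[[Gᵀ,H,R],[0,I,0],[Pᵀ,Rᵀ,Q]]` for a quadratic phase
function parametrizing the twisted graph Lagrangian of `χ = [[A,B],[C,D]]`. -/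
theorem phase_nondegeneracy (d N : ℕ)
    (A B C D E G H : Matrix (Fin d) (Fin d) ℝ)
    (P R : Matrix (Fin d) (Fin N) ℝ) (Q : Matrix (Fin N) (Fin N) ℝ)
    (hχ : (Matrix.fromBlocks A B C D)ᵀ *
        Matrix.fromBlocks (0 : Matrix (Fin d) (Fin d) ℝ) 1 (-1) 0 *
        Matrix.fromBlocks A B C D
      = Matrix.fromBlocks (0 : Matrix (Fin d) (Fin d) ℝ) 1 (-1) 0)
    (hE : Eᵀ = E) (hH : Hᵀ = H) (hQ : Qᵀ = Q)
    (hinj : ∀ θ : Fin N → ℝ,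
      P.mulVec θ = 0 → R.mulVec θ = 0 → Q.mulVec θ = 0 → θ = 0)
    (hparam : {p : (Fin d → ℝ) × (Fin d → ℝ) × (Fin d → ℝ) × (Fin d → ℝ) |
        ∃ θ : Fin N → ℝ,
          Pᵀ.mulVec p.1 + Rᵀ.mulVec p.2.1 + Q.mulVec θ = 0 ∧
          p.2.2.1 = E.mulVec p.1 + G.mulVec p.2.1 + P.mulVec θ ∧
          p.2.2.2 = Gᵀ.mulVec p.1 + H.mulVec p.2.1 + R.mulVec θ}
      = {p | ∃ η : Fin d → ℝ,
          p.2.2.2 = -η ∧ p.1 = A.mulVec p.2.1 + B.mulVec η ∧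
          p.2.2.1 = C.mulVec p.2.1 + D.mulVec η}) :
    IsUnit (Matrix.fromBlocks Gᵀ (Matrix.fromCols H R)
      (Matrix.fromRows (0 : Matrix (Fin d) (Fin d) ℝ) Pᵀ)
      (Matrix.fromBlocks (1 : Matrix (Fin d) (Fin d) ℝ) 0 Rᵀ Q)) :=
  phase_nondegeneracy_general d N A B C D E G H P R Q hinj hparam
end

section
/- Let 0 ≤ n ≤ d and U = [M₁ M₂] ∈ O(d) with M₁ ∈ M_{d×n}(ℝ), M₂ ∈ M_{d×(d−n)}(ℝ), set Y = ker M₂ᵀ ⊆ ℝ^d, let χ^U = diag(U,U) ∈ Sp(d,ℝ), and let J₂^{-1} be the symplectic matrix sending (x₁,x₂,ξ₁,ξ₂) ↦ (x₁, −ξ₂, ξ₁, x₂) with x₁ ∈ ℝ^n, x₂ ∈ ℝ^{d−n}. Then χ^U J₂^{-1} maps ℝ^d × {0} isomorphically onto Y × Y^⊥ ⊆ ℝ^d × ℝ^d. -/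
open Matrix

/-!
On `ℝ^d × {0}` the map is `(x, 0) ↦ (M₁ x₁, M₂ x₂)`. Since `M₁` and `M₂` have orthonormal
columns they are injective, so the map is a bijection onto `range M₁ × range M₂`. The relations
`M₂ᵀ M₁ = 0` and `M₁ M₁ᵀ + M₂ M₂ᵀ = 1` identify `ker M₂ᵀ` with `range M₁`, hence its orthogonal
complement with `ker M₁ᵀ`, which is `range M₂` by the same argument with the blocks swapped.
-/

open Set Function

theorem Set.bijOn_fst_univ_prod_singleton {α β : Type*} (b : β) :
    BijOn Prod.fst (univ ×ˢ {b} : Set (α × β)) univ := by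
  refine ⟨mapsTo_univ _ _, ?_, fun a _ => ⟨(a, b), ⟨trivial, rfl⟩, rfl⟩⟩
  intro x ⟨_, hx⟩ y ⟨_, hy⟩ hxy
  exact Prod.ext hxy ((eq_of_mem_singleton hx).trans (eq_of_mem_singleton hy).symm)

namespace Matrix

variable {R m ι κ : Type*}

theorem mulVec_injective_of_mul_eq_one [Semiring R] [Fintype m] [Fintype ι] [DecidableEq ι]
    {A : Matrix m ι R} {B : Matrix ι m R} (h : B * A = 1) : Injective A.mulVec :=
  LeftInverse.injective (g := B.mulVec) fun x => by rw [mulVec_mulVec, h, one_mulVec]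

theorem transpose_fromCols_mul_fromCols_eq_one [Semiring R] [Fintype m]
    [DecidableEq ι] [DecidableEq κ] {A : Matrix m ι R} {B : Matrix m κ R}
    (h : (fromCols A B)ᵀ * fromCols A B = 1) :
    Aᵀ * A = 1 ∧ Aᵀ * B = 0 ∧ Bᵀ * A = 0 ∧ Bᵀ * B = 1 := by
  rwa [transpose_fromCols, fromRows_mul_fromCols, ← fromBlocks_one, fromBlocks_inj] at h

theorem fromCols_mul_transpose_fromCols [Semiring R] [Fintype ι] [Fintype κ]
    (A : Matrix m ι R) (B : Matrix m κ R) :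
    fromCols A B * (fromCols A B)ᵀ = A * Aᵀ + B * Bᵀ := by
  rw [transpose_fromCols, fromCols_mul_fromRows]

variable [Fintype m] [Fintype ι] [Fintype κ] {A : Matrix m ι ℝ} {B : Matrix m κ ℝ}

theorem bijOn_prodMap_mulVec [DecidableEq ι] [DecidableEq κ] (hA : Aᵀ * A = 1)
    (hB : Bᵀ * B = 1) :
    BijOn (Prod.map A.mulVec B.mulVec) univ (range A.mulVec ×ˢ range B.mulVec) := by
  rw [← range_prodMap, ← image_univ]
  exact ((mulVec_injective_of_mul_eq_one hA).prodMap
    (mulVec_injective_of_mul_eq_one hB)).injOn.bijOn_image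

variable [DecidableEq m]

theorem setOf_transpose_mulVec_eq_zero_eq_range (hBA : Bᵀ * A = 0)
    (hsum : A * Aᵀ + B * Bᵀ = 1) : {x | Bᵀ *ᵥ x = 0} = range A.mulVec := by
  ext x
  refine ⟨fun hx => ⟨Aᵀ *ᵥ x, ?_⟩, ?_⟩
  · have := congrArg (· *ᵥ x) hsum
    simp only [add_mulVec, ← mulVec_mulVec, one_mulVec] at this
    simpa [show Bᵀ *ᵥ x = 0 from hx] using this
  · rintro ⟨a, rfl⟩
    simp [mulVec_mulVec, hBA]

theorem setOf_forall_dotProduct_eq_zero_eq_range (hBA : Bᵀ * A = 0)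
    (hsum : A * Aᵀ + B * Bᵀ = 1) :
    {z | ∀ y, Bᵀ *ᵥ y = 0 → y ⬝ᵥ z = 0} = range B.mulVec := by
  have hAB : Aᵀ * B = 0 := by simpa [transpose_mul] using congrArg transpose hBA
  rw [← setOf_transpose_mulVec_eq_zero_eq_range hAB ((add_comm _ _).trans hsum)]
  ext z
  calc (∀ y, y ∈ {x | Bᵀ *ᵥ x = 0} → y ⬝ᵥ z = 0) ↔ ∀ a, A *ᵥ a ⬝ᵥ z = 0 := by
        rw [setOf_transpose_mulVec_eq_zero_eq_range hBA hsum, forall_mem_range]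
    _ ↔ ∀ a, Aᵀ *ᵥ z ⬝ᵥ a = 0 := by
        simp only [dotProduct_comm (A *ᵥ _), dotProduct_mulVec, mulVec_transpose]
    _ ↔ Aᵀ *ᵥ z = 0 := dotProduct_eq_zero_iff

end Matrix

theorem chiU_J2inv_bijection_general (d n : ℕ)
    (M₁ : Matrix (Fin d) (Fin n) ℝ) (M₂ : Matrix (Fin d) (Fin (d - n)) ℝ)
    (hU1 : (Matrix.fromCols M₁ M₂)ᵀ * Matrix.fromCols M₁ M₂ = 1)
    (hU2 : Matrix.fromCols M₁ M₂ * (Matrix.fromCols M₁ M₂)ᵀ = 1) :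
    Set.BijOn
      (fun v : ((Fin n ⊕ Fin (d - n)) → ℝ) × ((Fin n ⊕ Fin (d - n)) → ℝ) =>
        ((Matrix.fromCols M₁ M₂).mulVec
            (Sum.elim (v.1 ∘ Sum.inl) (-(v.2 ∘ Sum.inr))),
         (Matrix.fromCols M₁ M₂).mulVec
            (Sum.elim (v.2 ∘ Sum.inl) (v.1 ∘ Sum.inr))))
      (Set.univ ×ˢ {0})
      ({x : Fin d → ℝ | M₂ᵀ.mulVec x = 0} ×ˢ
        {z : Fin d → ℝ | ∀ y : Fin d → ℝ, M₂ᵀ.mulVec y = 0 → y ⬝ᵥ z = (0 : ℝ)}) := by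
  obtain ⟨h11, -, h21, h22⟩ := transpose_fromCols_mul_fromCols_eq_one hU1
  have hsum : M₁ * M₁ᵀ + M₂ * M₂ᵀ = 1 := by rwa [fromCols_mul_transpose_fromCols] at hU2
  rw [setOf_transpose_mulVec_eq_zero_eq_range h21 hsum,
    setOf_forall_dotProduct_eq_zero_eq_range h21 hsum]
  refine (((bijOn_prodMap_mulVec h11 h22).comp
    (Equiv.sumArrowEquivProdArrow _ _ _).bijective.bijOn_univ).comp
    (bijOn_fst_univ_prod_singleton 0)).congr ?_
  rintro ⟨a, z⟩ ⟨-, rfl : z = 0⟩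
  simp only [Pi.zero_comp, neg_zero, fromCols_mulVec_sumElim, mulVec_zero, add_zero, zero_add]
  rfl

/-- For `U = [M₁ M₂] ∈ O(d)` with `Y = ker M₂ᵀ`, the map `χ^U J₂⁻¹` sends `ℝ^d × {0}`
bijectively onto `Y × Y^⊥`. -/
theorem chiU_J2inv_bijection (d n : ℕ) (hn : n ≤ d)
    (M₁ : Matrix (Fin d) (Fin n) ℝ) (M₂ : Matrix (Fin d) (Fin (d - n)) ℝ)
    (hU1 : (Matrix.fromCols M₁ M₂)ᵀ * Matrix.fromCols M₁ M₂ = 1)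
    (hU2 : Matrix.fromCols M₁ M₂ * (Matrix.fromCols M₁ M₂)ᵀ = 1) :
    Set.BijOn
      (fun v : ((Fin n ⊕ Fin (d - n)) → ℝ) × ((Fin n ⊕ Fin (d - n)) → ℝ) =>
        ((Matrix.fromCols M₁ M₂).mulVec
            (Sum.elim (v.1 ∘ Sum.inl) (-(v.2 ∘ Sum.inr))),
         (Matrix.fromCols M₁ M₂).mulVec
            (Sum.elim (v.2 ∘ Sum.inl) (v.1 ∘ Sum.inr))))
      (Set.univ ×ˢ {0})
      ({x : Fin d → ℝ | M₂ᵀ.mulVec x = 0} ×ˢ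
        {z : Fin d → ℝ | ∀ y : Fin d → ℝ, M₂ᵀ.mulVec y = 0 → y ⬝ᵥ z = (0 : ℝ)}) :=
  chiU_J2inv_bijection_general d n M₁ M₂ hU1 hU2
end
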